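/- Combining regret matching with the performance-difference lemma: in a finite discounted MDP, if for each state s we set π̂(s) = RM(π(s), Q^π(s)) (the regret-matching policy with respect to Q^π(s), taken equal to π(s) when the positive-part regret vector vanishes), then for every state s and every direction field dπ(s)/dt = ω(s)(π̂(s) - π(s)) with ω(s) ∈ [η, 1], one has ⟨∇_π V^π(s₀), dπ/dt⟩ ≥ 0 for every initial state s₀. -/

import Mathlib

/-!
Regret matching moves `π(s)` towards the actions whose value beats the current average
`V = ⟨π(s), Q(s)⟩`. Writing `R⁺` for the positive-part regret vector and `Z = ‖R⁺‖₁`, the identity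
`Q a · R⁺ a = (R⁺ a)² + V · R⁺ a` gives `⟨π̂(s) - π(s), Q(s)⟩ = ‖R⁺‖₂² / Z ≥ 0`. Every component of
the gradient is a nonnegative occupancy weight times `Q(s, a)`, so the pairing with the direction
field is a nonnegative combination of these per-state inner products.
-/

open Finset

/-- `chainProb Pmat s₀ k s` is the probability that the Markov chain with transition
matrix `Pmat`, started at `s₀`, is in state `s` at time `k`. -/
def chainProb {S : Type*} [Fintype S] [DecidableEq S]
    (Pmat : S → S → ℝ) (s₀ : S) : ℕ → S → ℝ
  | 0 => fun s => if s = s₀ then 1 else 0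
  | k + 1 => fun s => ∑ s', chainProb Pmat s₀ k s' * Pmat s' s

section MarkovChain

variable {S : Type*} [Fintype S] [DecidableEq S] {Pmat : S → S → ℝ}

lemma chainProb_nonneg (hP : ∀ s s', 0 ≤ Pmat s s') (s₀ : S) (k : ℕ) (s : S) :
    0 ≤ chainProb Pmat s₀ k s := by
  induction k generalizing s with
  | zero => simp only [chainProb]; split <;> norm_num
  | succ k ih => exact sum_nonneg fun s' _ => mul_nonneg (ih s') (hP s' s)

lemma discounted_occupancy_nonneg (hP : ∀ s s', 0 ≤ Pmat s s') {γ : ℝ} (hγ0 : 0 ≤ γ)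
    (hγ1 : γ ≤ 1) (s₀ s : S) :
    0 ≤ (1 - γ) * ∑' k : ℕ, γ ^ k * chainProb Pmat s₀ k s :=
  mul_nonneg (sub_nonneg.mpr hγ1) <|
    tsum_nonneg fun k => mul_nonneg (pow_nonneg hγ0 k) (chainProb_nonneg hP s₀ k s)

end MarkovChain

section RegretMatching

variable {A : Type*} [Fintype A]

def posRegret (p q : A → ℝ) (a : A) : ℝ :=
  max (q a - ∑ b, p b * q b) 0

lemma mul_max_sub_zero (x v : ℝ) :
    x * max (x - v) 0 = max (x - v) 0 ^ 2 + v * max (x - v) 0 := by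
  rcases le_total (x - v) 0 with h | h
  · rw [max_eq_right h]; ring
  · rw [max_eq_left h]; ring

lemma sum_mul_regretMatching_sub (p q : A → ℝ) (hZ : ∑ b, posRegret p q b ≠ 0) :
    ∑ a, q a * (posRegret p q a / ∑ b, posRegret p q b - p a) =
      (∑ a, posRegret p q a ^ 2) / ∑ b, posRegret p q b := by
  set V := ∑ b, p b * q b
  set Z := ∑ b, posRegret p q b
  have hgain : ∑ a, q a * posRegret p q a = ∑ a, posRegret p q a ^ 2 + V * Z := by
    simp only [posRegret, mul_max_sub_zero, sum_add_distrib, ← mul_sum]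
    rfl
  calc ∑ a, q a * (posRegret p q a / Z - p a)
      = (∑ a, q a * posRegret p q a) / Z - V := by
        rw [sum_div, ← sum_sub_distrib]
        exact sum_congr rfl fun a _ => by ring
    _ = (∑ a, posRegret p q a ^ 2) / Z := by
        rw [hgain]; field_simp; ring

lemma regretMatching_inner_sub_nonneg (p q phat : A → ℝ)
    (hpos : (∃ a, 0 < posRegret p q a) → ∀ a, phat a = posRegret p q a / ∑ b, posRegret p q b)
    (hzero : ¬ (∃ a, 0 < posRegret p q a) → ∀ a, phat a = p a) :
    0 ≤ ∑ a, q a * (phat a - p a) := by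
  by_cases h : ∃ a, 0 < posRegret p q a
  · obtain ⟨a, ha⟩ := h
    have hZ : 0 < ∑ b, posRegret p q b :=
      ha.trans_le <| single_le_sum (f := posRegret p q) (fun b _ => le_max_right _ _) (mem_univ a)
    simp only [hpos ⟨a, ha⟩, sum_mul_regretMatching_sub p q hZ.ne']
    exact div_nonneg (sum_nonneg fun b _ => sq_nonneg _) hZ.le
  · simp [hzero h]

end RegretMatching

theorem stmt_14_general {S A : Type*} [Fintype S] [Fintype A] [DecidableEq S]
    (P : S → A → S → ℝ) (γ : ℝ)
    (hγ0 : 0 < γ) (hγ1 : γ < 1)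
    (hPnn : ∀ s a s', 0 ≤ P s a s')
    (π : S → A → ℝ)
    (hπnn : ∀ s a, 0 ≤ π s a)
    (Qπ : S → A → ℝ)
    (η : ℝ) (hη0 : 0 < η)
    (ω : S → ℝ) (hω : ∀ s, ω s ∈ Set.Icc η 1)
    (πhat : S → A → ℝ)
    -- `π̂(s)` is the regret-matching policy with respect to `Q^π(s)` …
    (hπhat : ∀ s, (∃ a, 0 < max (Qπ s a - ∑ b, π s b * Qπ s b) 0) →
      ∀ a, πhat s a =
        max (Qπ s a - ∑ b, π s b * Qπ s b) 0 /
          ∑ b, max (Qπ s b - ∑ c, π s c * Qπ s c) 0)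
    -- … taken equal to `π(s)` when the positive-part regret vector vanishes
    (hπhat0 : ∀ s, ¬ (∃ a, 0 < max (Qπ s a - ∑ b, π s b * Qπ s b) 0) →
      ∀ a, πhat s a = π s a) :
    ∀ s₀ : S,
      0 ≤ ∑ s, ∑ a,
        ((1 / (1 - γ)) *
            ((1 - γ) * ∑' k : ℕ,
              γ ^ k * chainProb (fun t t' => ∑ b, π t b * P t b t') s₀ k s) *
            Qπ s a) *
          (ω s * (πhat s a - π s a)) := by
  intro s₀
  have hPπ : ∀ t t', 0 ≤ ∑ b, π t b * P t b t' := fun t t' =>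
    sum_nonneg fun b _ => mul_nonneg (hπnn t b) (hPnn t b t')
  refine sum_nonneg fun s _ => ?_
  set d := (1 - γ) * ∑' k : ℕ, γ ^ k * chainProb (fun t t' => ∑ b, π t b * P t b t') s₀ k s
  have hd : 0 ≤ d := discounted_occupancy_nonneg hPπ hγ0.le hγ1.le s₀ s
  have hω0 : 0 ≤ ω s := hη0.le.trans (hω s).1
  have hgain : 0 ≤ ∑ a, Qπ s a * (πhat s a - π s a) :=
    regretMatching_inner_sub_nonneg (π s) (Qπ s) (πhat s) (hπhat s) (hπhat0 s)
  calc (0 : ℝ) ≤ (1 / (1 - γ) * d * ω s) * ∑ a, Qπ s a * (πhat s a - π s a) := by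
        have : 0 < 1 - γ := sub_pos.mpr hγ1
        positivity
    _ = _ := by rw [mul_sum]; exact sum_congr rfl fun a _ => by ring

/-- Regret matching combined with the performance-difference lemma: the regret-matching
direction field `dπ(s)/dt = ω(s)(π̂(s) - π(s))` is an ascent direction for `V^π(s₀)`
(whose gradient is `∂V^π(s₀)/∂π(s,a) = (1/(1-γ)) d^π_{s₀}(s) Q^π(s,a)`), for every
initial state `s₀`. -/
theorem stmt_14 {S A : Type*} [Fintype S] [Fintype A] [DecidableEq S]
    [Nonempty S] [Nonempty A]
    (P : S → A → S → ℝ) (r : S → A → ℝ) (γ : ℝ)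
    (hγ0 : 0 < γ) (hγ1 : γ < 1)
    (hPnn : ∀ s a s', 0 ≤ P s a s') (hPsum : ∀ s a, ∑ s', P s a s' = 1)
    (π : S → A → ℝ)
    (hπnn : ∀ s a, 0 ≤ π s a) (hπsum : ∀ s, ∑ a, π s a = 1)
    (Qπ : S → A → ℝ)
    (hQπ : ∀ s a, Qπ s a = r s a + γ * ∑ s', P s a s' * ∑ a', π s' a' * Qπ s' a')
    (η : ℝ) (hη0 : 0 < η) (hη1 : η < 1)
    (ω : S → ℝ) (hω : ∀ s, ω s ∈ Set.Icc η 1)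
    (πhat : S → A → ℝ)
    -- `π̂(s)` is the regret-matching policy with respect to `Q^π(s)` …
    (hπhat : ∀ s, (∃ a, 0 < max (Qπ s a - ∑ b, π s b * Qπ s b) 0) →
      ∀ a, πhat s a =
        max (Qπ s a - ∑ b, π s b * Qπ s b) 0 /
          ∑ b, max (Qπ s b - ∑ c, π s c * Qπ s c) 0)
    -- … taken equal to `π(s)` when the positive-part regret vector vanishes
    (hπhat0 : ∀ s, ¬ (∃ a, 0 < max (Qπ s a - ∑ b, π s b * Qπ s b) 0) →
      ∀ a, πhat s a = π s a) :
    ∀ s₀ : S,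
      0 ≤ ∑ s, ∑ a,
        ((1 / (1 - γ)) *
            ((1 - γ) * ∑' k : ℕ,
              γ ^ k * chainProb (fun t t' => ∑ b, π t b * P t b t') s₀ k s) *
            Qπ s a) *
          (ω s * (πhat s a - π s a)) :=
  stmt_14_general P γ hγ0 hγ1 hPnn π hπnn Qπ η hη0 ω hω πhat hπhat hπhat0
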